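/- With the extremal setup below, assume further that the vertices v₁, v₂, v_n are pairwise adjacent and induce an unbalanced triangle in Γ′. Then, for all sufficiently large n, Γ′ has exactly one negative edge. -/

import Mathlib

open Matrix

/-- A signed graph of order `n`: a real symmetric `n × n` matrix with zero diagonal
whose off-diagonal entries lie in `{-1, 0, 1}`. -/
def IsSignedGraph {n : ℕ} (A : Matrix (Fin n) (Fin n) ℝ) : Prop :=
  A.IsSymm ∧ (∀ i, A i i = 0) ∧ ∀ i j, A i j = -1 ∨ A i j = 0 ∨ A i j = 1

/-- The index (largest eigenvalue) of a signed graph. -/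
noncomputable def lambdaMax {n : ℕ} (A : Matrix (Fin n) (Fin n) ℝ) : ℝ :=
  sSup (spectrum ℝ A)

/-- The smallest eigenvalue of a signed graph. -/
noncomputable def lambdaMin {n : ℕ} (A : Matrix (Fin n) (Fin n) ℝ) : ℝ :=
  sInf (spectrum ℝ A)

/-- The spectral radius of a signed graph. -/
noncomputable def rho {n : ℕ} (A : Matrix (Fin n) (Fin n) ℝ) : ℝ :=
  max (lambdaMax A) (-(lambdaMin A))

/-- There is a cycle, all of whose vertices lie in `s`, along whose edges
the product of the entries of `A` is negative. -/
def HasNegCycleOn {n : ℕ} (A : Matrix (Fin n) (Fin n) ℝ) (s : Set (Fin n)) : Prop :=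
  ∃ m : ℕ, 3 ≤ m ∧ ∃ c : ℕ → Fin n,
    (∀ i < m, ∀ j < m, c i = c j → i = j) ∧ (∀ i < m, c i ∈ s) ∧
    (∀ i < m, A (c i) (c ((i + 1) % m)) ≠ 0) ∧
    (∏ i ∈ Finset.range m, A (c i) (c ((i + 1) % m))) < 0

/-- A signed graph is unbalanced if it has a negative cycle. -/
def IsUnbalanced {n : ℕ} (A : Matrix (Fin n) (Fin n) ℝ) : Prop :=
  HasNegCycleOn A Set.univ

/-- An `m`-element set of pairwise adjacent vertices whose induced signed complete
subgraph is unbalanced. -/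
def IsKmMinus {n : ℕ} (A : Matrix (Fin n) (Fin n) ℝ) (m : ℕ) (s : Finset (Fin n)) : Prop :=
  s.card = m ∧ (∀ i ∈ s, ∀ j ∈ s, i ≠ j → A i j ≠ 0) ∧ HasNegCycleOn A ↑s

/-- A `K₄⁻` of a signed graph. -/
def IsK4Minus {n : ℕ} (A : Matrix (Fin n) (Fin n) ℝ) (s : Finset (Fin n)) : Prop :=
  IsKmMinus A 4 s

/-- A signed graph is `t𝒦₄⁻`-free if it contains fewer than `t` distinct `K₄⁻`'s. -/
def TK4Free {n : ℕ} (t : ℕ) (A : Matrix (Fin n) (Fin n) ℝ) : Prop :=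
  {s : Finset (Fin n) | IsK4Minus A s}.ncard < t

/-- Switching isomorphism of signed graphs: `B = (PD) A (PD)ᵀ` for a permutation
matrix `P` and a `±1` diagonal matrix `D`. -/
def SwitchIso {n : ℕ} (A B : Matrix (Fin n) (Fin n) ℝ) : Prop :=
  ∃ (σ : Equiv.Perm (Fin n)) (d : Fin n → ℝ), (∀ i, d i = 1 ∨ d i = -1) ∧
    B = (σ.permMatrix ℝ * Matrix.diagonal d) * A * (σ.permMatrix ℝ * Matrix.diagonal d)ᵀ

/-- The signed graph `Γ_{s,n}`: the vertices `0, …, n-2` are pairwise adjacent,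
the last vertex `n-1` is adjacent exactly to `0, …, s`, and every edge is positive
except the single negative edge joining `n-1` and `0`. -/
noncomputable def GammaSN (s n : ℕ) : Matrix (Fin n) (Fin n) ℝ :=
  fun i j =>
    if i = j then 0
    else if i.val ≠ n - 1 ∧ j.val ≠ n - 1 then 1
    else if min i.val j.val = 0 then -1
    else if min i.val j.val ≤ s then 1
    else 0

/-- The signed graph `Σ_{k,n}` with parameter `r`: vertex `0` is `u₁`, vertex `1` is `u₂`,
vertices `2, …, r+1` are `w₁, …, w_r`, vertices `r+2, …, r+k+1` are `q₁, …, q_k`, and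
vertices `r+k+2, …, n-1` are `v₁, …, v_{n-2-r-k}`.  The only negative edge is `u₁u₂`. -/
noncomputable def SigmaKN (r k n : ℕ) : Matrix (Fin n) (Fin n) ℝ :=
  fun i j =>
    if i = j then 0
    else if min i.val j.val = 0 then (if max i.val j.val = 1 then -1 else 1)
    else if min i.val j.val = 1 then (if max i.val j.val ≤ r + k + 1 then 1 else 0)
    else if max i.val j.val ≤ r + 1 then 1
    else if max i.val j.val ≤ r + k + 1 then 0
    else 1

/-!
Comparing with `Γ_{1,n}` (a positive `K_{n-1}` plus a vertex joined to two of its vertices by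
edges of opposite sign, which contains no `K₄⁻` at all) gives `λ₁(A) ≥ n - 2`, whereas a
nonnegative unit vector vanishing at two vertices has Rayleigh quotient at most
`(∑ xᵢ)² - 1 ≤ n - 3`. Hence no unbalanced `t𝒦₄⁻`-free signed graph `B ≥ A` (entrywise)
differs from `A` off the diagonal: by Rayleigh's principle `x` would be an eigenvector of `B` too,
and `(B - A) x = 0` would make `x` vanish at both ends of a changed entry.

Two such modifications give the theorem. Deleting a negative edge off the triangle `v₁v₂vₙ`
keeps the graph unbalanced and creates no `K₄⁻`, so every negative edge lies on the triangle. If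
all three were negative, making `v₁v₂` and `v₂vₙ` positive would leave `vₙv₁` as the only
negative edge, and then every `K₄⁻` of the new graph is already one of `A`. As the triangle is
negative, exactly one of its edges is negative.
-/

open Finset

section Spectral

variable {n : ℕ} {B : Matrix (Fin n) (Fin n) ℝ}

open scoped MatrixOrder in
theorem posSemidef_algebraMap_lambdaMax_sub (hB : B.IsSymm) :
    (algebraMap ℝ _ (lambdaMax B) - B).PosSemidef := by
  have hH : B.IsHermitian := hB
  refine (le_algebraMap_iff_spectrum_le hH).2 fun μ hμ => le_csSup ?_ hμ
  rw [hH.spectrum_real_eq_range_eigenvalues]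
  exact (Set.finite_range _).bddAbove

theorem dotProduct_algebraMap_sub_mulVec (c : ℝ) (x : Fin n → ℝ) :
    x ⬝ᵥ (algebraMap ℝ _ c - B) *ᵥ x = c * (x ⬝ᵥ x) - x ⬝ᵥ B *ᵥ x := by
  rw [Algebra.algebraMap_eq_smul_one, sub_mulVec, smul_mulVec, one_mulVec, dotProduct_sub,
    dotProduct_smul, smul_eq_mul]

theorem dotProduct_mulVec_le_lambdaMax_mul (hB : B.IsSymm) (x : Fin n → ℝ) :
    x ⬝ᵥ B *ᵥ x ≤ lambdaMax B * (x ⬝ᵥ x) := by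
  have h := (posSemidef_algebraMap_lambdaMax_sub hB).dotProduct_mulVec_nonneg x
  rw [star_trivial, dotProduct_algebraMap_sub_mulVec] at h
  linarith

theorem mulVec_eq_lambdaMax_smul_of_le (hB : B.IsSymm) {x : Fin n → ℝ}
    (h : lambdaMax B * (x ⬝ᵥ x) ≤ x ⬝ᵥ B *ᵥ x) : B *ᵥ x = lambdaMax B • x := by
  have hzero := ((posSemidef_algebraMap_lambdaMax_sub hB).dotProduct_mulVec_zero_iff x).1 (by
    rw [star_trivial, dotProduct_algebraMap_sub_mulVec]
    linarith [dotProduct_mulVec_le_lambdaMax_mul hB x])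
  rw [Algebra.algebraMap_eq_smul_one, sub_mulVec, smul_mulVec, one_mulVec, sub_eq_zero] at hzero
  exact hzero.symm

theorem dotProduct_mulVec_mono {ι : Type*} [Fintype ι] {A B : Matrix ι ι ℝ}
    (hAB : ∀ i j, A i j ≤ B i j) {x : ι → ℝ} (hx : ∀ i, 0 ≤ x i) :
    x ⬝ᵥ A *ᵥ x ≤ x ⬝ᵥ B *ᵥ x :=
  sum_le_sum fun i _ => mul_le_mul_of_nonneg_left
    (sum_le_sum fun j _ => mul_le_mul_of_nonneg_right (hAB i j) (hx j)) (hx i)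

/-- Rayleigh's principle forces `B x = A x`, and the nonnegative terms of `((B - A) x) i`
must then all vanish. -/
theorem eq_zero_of_lt_of_lambdaMax_le {A : Matrix (Fin n) (Fin n) ℝ} (hB : B.IsSymm)
    {x : Fin n → ℝ} (hx : ∀ i, 0 ≤ x i) (hxx : x ⬝ᵥ x = 1) (hAx : A *ᵥ x = lambdaMax A • x)
    (hAB : ∀ i j, A i j ≤ B i j) (hlam : lambdaMax B ≤ lambdaMax A) {i j : Fin n}
    (hij : A i j < B i j) : x j = 0 := by
  have hquad : x ⬝ᵥ A *ᵥ x = lambdaMax A := by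
    rw [hAx, dotProduct_smul, hxx, smul_eq_mul, mul_one]
  have hmono := dotProduct_mulVec_mono hAB hx
  have hray := dotProduct_mulVec_le_lambdaMax_mul hB x
  rw [hxx, mul_one] at hray
  have hBx : B *ᵥ x = A *ᵥ x := by
    rw [mulVec_eq_lambdaMax_smul_of_le hB (by rw [hxx]; linarith), hAx,
      le_antisymm hlam (by linarith)]
  have hrow : ∑ k, (B i k - A i k) * x k = 0 := by
    simpa [sub_mul, sum_sub_distrib, mulVec, dotProduct, sub_eq_zero] using congrFun hBx i
  have hterm := (sum_eq_zero_iff_of_nonneg fun k _ =>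
    mul_nonneg (sub_nonneg.2 (hAB i k)) (hx k)).1 hrow j (mem_univ j)
  exact (mul_eq_zero.1 hterm).resolve_left (sub_ne_zero.2 hij.ne')

theorem card_sub_one_le_lambdaMax (hB : B.IsSymm) (hdiag : ∀ i, B i i = 0)
    {S : Finset (Fin n)} (hS : S.Nonempty) (hclique : ∀ i ∈ S, ∀ j ∈ S, i ≠ j → B i j = 1) :
    (#S : ℝ) - 1 ≤ lambdaMax B := by
  set z : Fin n → ℝ := fun i => if i ∈ S then 1 else 0
  have hrow : ∀ i ∈ S, (B *ᵥ z) i = #S - 1 := by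
    intro i hi
    have : ∀ j, B i j * z j = if j ∈ S.erase i then 1 else 0 := by
      intro j
      by_cases hj : j = i
      · subst hj; simp [z, hdiag]
      · by_cases hjS : j ∈ S
        · simp [z, hj, hjS, hclique i hi j hjS (Ne.symm hj)]
        · simp [z, hjS]
    simp only [mulVec, dotProduct, this, sum_boole, filter_mem_eq_inter, univ_inter,
      card_erase_of_mem hi]
    rw [Nat.cast_sub (one_le_card.2 hS)]
    simp
  have hdot : ∀ v : Fin n → ℝ, z ⬝ᵥ v = ∑ i ∈ S, v i := fun v => by
    simp [z, dotProduct, ite_mul, sum_ite_mem]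
  have hzz : z ⬝ᵥ z = #S := by simp [hdot, z]
  have hzBz : z ⬝ᵥ B *ᵥ z = #S * (#S - 1) := by
    rw [hdot, sum_congr rfl hrow, sum_const, nsmul_eq_mul]
  have hpos : (0 : ℝ) < #S := by exact_mod_cast hS.card_pos
  have h := dotProduct_mulVec_le_lambdaMax_mul hB z
  rw [hzz, hzBz, mul_comm] at h
  exact le_of_mul_le_mul_right h hpos

end Spectral

section SignedGraph

variable {n : ℕ} {A : Matrix (Fin n) (Fin n) ℝ}

theorem IsSignedGraph.apply_le_one (hA : IsSignedGraph A) (i j : Fin n) : A i j ≤ 1 := by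
  rcases hA.2.2 i j with h | h | h <;> rw [h] <;> norm_num

theorem IsSignedGraph.dotProduct_mulVec_le (hA : IsSignedGraph A) {x : Fin n → ℝ}
    (hx : ∀ i, 0 ≤ x i) : x ⬝ᵥ A *ᵥ x ≤ (∑ i, x i) ^ 2 - x ⬝ᵥ x := by
  have hle : ∀ i j, A i j ≤ of (fun i j : Fin n => if i = j then (0 : ℝ) else 1) i j := by
    intro i j
    by_cases hij : i = j
    · simp [hij, hA.2.1]
    · simpa [hij] using hA.apply_le_one i j
  refine (dotProduct_mulVec_mono hle hx).trans_eq ?_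
  simp only [dotProduct, mulVec, of_apply, ite_mul, zero_mul, one_mul, sq, sum_mul]
  have hrow : ∀ k, ∑ i, (if k = i then 0 else x i) = ∑ i, x i - x k := fun k => by
    rw [← sum_erase_add _ _ (mem_univ k), if_pos rfl, add_zero,
      ← sum_erase_add _ _ (mem_univ k), add_sub_cancel_right]
    exact sum_congr rfl fun i hi => if_neg (ne_of_mem_erase hi).symm
  simp only [hrow, mul_sub, sum_sub_distrib]

/-- With two coordinates of `x` vanishing, Cauchy–Schwarz bounds `(∑ i, x i) ^ 2` by `n - 2`. -/
theorem IsSignedGraph.dotProduct_mulVec_le_of_eq_zero (hA : IsSignedGraph A) {x : Fin n → ℝ}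
    (hx : ∀ i, 0 ≤ x i) (hxx : x ⬝ᵥ x = 1) {a b : Fin n} (hab : a ≠ b) (ha : x a = 0)
    (hb : x b = 0) : x ⬝ᵥ A *ᵥ x ≤ n - 3 := by
  set s : Finset (Fin n) := univ \ {a, b}
  have hcard : (#s : ℝ) = n - 2 := by
    have h2 : 2 ≤ n := by simpa [card_pair hab] using card_le_univ {a, b}
    rw [card_sdiff_of_subset (subset_univ _), card_pair hab, card_univ, Fintype.card_fin,
      Nat.cast_sub h2, Nat.cast_ofNat]
  have hsum : ∑ i, x i = ∑ i ∈ s, x i := by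
    refine (sum_subset (subset_univ s) fun i _ hi => ?_).symm
    simp only [s, mem_sdiff, mem_univ, true_and, not_not, mem_insert, mem_singleton] at hi
    rcases hi with rfl | rfl <;> assumption
  have hsq : ∑ i ∈ s, x i ^ 2 ≤ 1 := by
    rw [← hxx, dotProduct]
    simpa [sq] using
      sum_le_sum_of_subset_of_nonneg (subset_univ s) fun i _ _ => mul_self_nonneg (x i)
  have hcs : (∑ i ∈ s, x i) ^ 2 ≤ #s * ∑ i ∈ s, x i ^ 2 := sq_sum_le_card_mul_sum_sq
  have := hA.dotProduct_mulVec_le hx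
  rw [hsum, hxx] at this
  nlinarith

end SignedGraph

section SetEdge

variable {ι R : Type*} [DecidableEq ι]

def setEdge (M : Matrix ι ι R) (a b : ι) (c : R) : Matrix ι ι R :=
  fun i j => if s(i, j) = s(a, b) then c else M i j

variable {M : Matrix ι ι R} {a b : ι} {c : R}

@[simp]
theorem setEdge_apply_self : setEdge M a b c a b = c := if_pos rfl

theorem setEdge_apply_of_ne {i j : ι} (h : s(i, j) ≠ s(a, b)) : setEdge M a b c i j = M i j :=
  if_neg h

theorem setEdge_apply_of_notMem {s : Set ι} (hab : ¬(a ∈ s ∧ b ∈ s)) {i j : ι} (hi : i ∈ s)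
    (hj : j ∈ s) : setEdge M a b c i j = M i j := by
  refine setEdge_apply_of_ne fun h => hab ?_
  rcases Sym2.eq_iff.1 h with ⟨rfl, rfl⟩ | ⟨rfl, rfl⟩
  exacts [⟨hi, hj⟩, ⟨hj, hi⟩]

theorem setEdge_isSymm (hM : M.IsSymm) : (setEdge M a b c).IsSymm := by
  ext i j
  simp only [transpose_apply, setEdge, Sym2.eq_swap (a := j), hM.apply j i]

theorem le_setEdge [Preorder R] (hM : M.IsSymm) (h : M a b ≤ c) (i j : ι) :
    M i j ≤ setEdge M a b c i j := by
  unfold setEdge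
  split_ifs with hij
  · rcases Sym2.eq_iff.1 hij with ⟨rfl, rfl⟩ | ⟨rfl, rfl⟩
    exacts [h, hM.apply i j ▸ h]
  · exact le_rfl

theorem ne_zero_of_setEdge_ne_zero [Zero R] (hM : M.IsSymm) (h : M a b ≠ 0) {i j : ι}
    (hij : setEdge M a b c i j ≠ 0) : M i j ≠ 0 := by
  by_cases he : s(i, j) = s(a, b)
  · rcases Sym2.eq_iff.1 he with ⟨rfl, rfl⟩ | ⟨rfl, rfl⟩
    exacts [h, hM.apply i j ▸ h]
  · rwa [setEdge_apply_of_ne he] at hij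

theorem neg_of_setEdge_neg [Preorder R] [Zero R] (hc : 0 ≤ c) {i j : ι}
    (hij : setEdge M a b c i j < 0) : M i j < 0 := by
  by_cases he : s(i, j) = s(a, b)
  · rw [setEdge, if_pos he] at hij
    exact absurd hc hij.not_ge
  · rwa [setEdge_apply_of_ne he] at hij

theorem IsSignedGraph.setEdge {n : ℕ} {M : Matrix (Fin n) (Fin n) ℝ} (hM : IsSignedGraph M)
    {a b : Fin n} (hab : a ≠ b) {c : ℝ} (hc : c = -1 ∨ c = 0 ∨ c = 1) :
    IsSignedGraph (_root_.setEdge M a b c) := by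
  refine ⟨setEdge_isSymm hM.1, fun i => ?_, fun i j => ?_⟩
  · rw [setEdge_apply_of_ne fun h => hab ?_, hM.2.1]
    rcases Sym2.eq_iff.1 h with ⟨rfl, rfl⟩ | ⟨rfl, rfl⟩ <;> rfl
  · unfold _root_.setEdge
    split_ifs
    exacts [hc, hM.2.2 i j]

end SetEdge

section NegCycle

variable {n : ℕ} {A B : Matrix (Fin n) (Fin n) ℝ} {s t : Set (Fin n)}

theorem HasNegCycleOn.mono (h : HasNegCycleOn A s) (hst : s ⊆ t) : HasNegCycleOn A t := by
  obtain ⟨m, hm, c, hinj, hmem, hne, hprod⟩ := h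
  exact ⟨m, hm, c, hinj, fun i hi => hst (hmem i hi), hne, hprod⟩

theorem HasNegCycleOn.congr (h : HasNegCycleOn A s)
    (hAB : ∀ i ∈ s, ∀ j ∈ s, A i j = B i j) : HasNegCycleOn B s := by
  obtain ⟨m, hm, c, hinj, hmem, hne, hprod⟩ := h
  have hstep : ∀ i < m, A (c i) (c ((i + 1) % m)) = B (c i) (c ((i + 1) % m)) := fun i hi =>
    hAB _ (hmem i hi) _ (hmem _ (Nat.mod_lt _ (by omega)))
  refine ⟨m, hm, c, hinj, hmem, fun i hi => hstep i hi ▸ hne i hi, ?_⟩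
  rwa [← prod_congr rfl fun i hi => hstep i (mem_range.1 hi)]

theorem HasNegCycleOn.exists_neg (h : HasNegCycleOn A s) : ∃ i ∈ s, ∃ j ∈ s, A i j < 0 := by
  obtain ⟨m, hm, c, -, hmem, -, hprod⟩ := h
  by_contra! hpos
  exact hprod.not_ge <| prod_nonneg fun i hi =>
    hpos _ (hmem i (mem_range.1 hi)) _ (hmem _ (Nat.mod_lt _ (by omega)))

theorem hasNegCycleOn_of_triangle {a b c : Fin n} (hab : a ≠ b) (hbc : b ≠ c) (hac : a ≠ c)
    (ha : a ∈ s) (hb : b ∈ s) (hc : c ∈ s) (hneg : A a b * A b c * A c a < 0) :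
    HasNegCycleOn A s := by
  have hne : A a b ≠ 0 ∧ A b c ≠ 0 ∧ A c a ≠ 0 := by
    refine ⟨?_, ?_, ?_⟩ <;> rintro h <;> simp [h] at hneg
  refine ⟨3, le_rfl, fun k => if k = 0 then a else if k = 1 then b else c, ?_, ?_, ?_, ?_⟩
  · intro i hi j hj hij
    interval_cases i <;> interval_cases j <;> simp_all [eq_comm]
  · intro i hi; interval_cases i <;> simpa
  · intro i hi; interval_cases i <;> simp [hne.1, hne.2.1, hne.2.2]
  · simpa [prod_range_succ] using hneg

end NegCycle

section K4

variable {n t : ℕ} {A B : Matrix (Fin n) (Fin n) ℝ}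

theorem TK4Free.pos (h : TK4Free t A) : 0 < t := (Nat.zero_le _).trans_lt h

theorem TK4Free.mono (hA : TK4Free t A) (h : ∀ s, IsK4Minus B s → IsK4Minus A s) :
    TK4Free t B :=
  (Set.ncard_le_ncard (fun s hs => h s hs) (Set.toFinite _)).trans_lt hA

theorem IsK4Minus.of_setEdge_zero {a b : Fin n} (hab : a ≠ b) {s : Finset (Fin n)}
    (h : IsK4Minus (setEdge A a b 0) s) : IsK4Minus A s := by
  obtain ⟨hcard, hadj, hcyc⟩ := h
  have hnot : ¬(a ∈ (s : Set (Fin n)) ∧ b ∈ (s : Set (Fin n))) := fun ⟨ha, hb⟩ =>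
    hadj a ha b hb hab setEdge_apply_self
  have heq : ∀ i ∈ (s : Set (Fin n)), ∀ j ∈ (s : Set (Fin n)), setEdge A a b 0 i j = A i j :=
    fun i hi j hj => setEdge_apply_of_notMem hnot hi hj
  exact ⟨hcard, fun i hi j hj hij => heq i hi j hj ▸ hadj i hi j hj hij, hcyc.congr heq⟩

/-- A `4`-clique containing an edge `u v` with `A u v < 0` also contains a vertex `w` outside
`T`, and the triangle `u w v` is negative. -/
theorem IsK4Minus.of_neg_mem (hA : IsSignedGraph A) {T : Finset (Fin n)} (hT : #T ≤ 3)
    (hAneg : ∀ i j, A i j < 0 → i ∈ T ∧ j ∈ T)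
    (hsupp : ∀ i j, B i j ≠ 0 → A i j ≠ 0) (hBneg : ∀ i j, B i j < 0 → A i j < 0)
    {s : Finset (Fin n)} (h : IsK4Minus B s) : IsK4Minus A s := by
  obtain ⟨hcard, hadj, hcyc⟩ := h
  have hadjA : ∀ i ∈ s, ∀ j ∈ s, i ≠ j → A i j ≠ 0 := fun i hi j hj hij =>
    hsupp i j (hadj i hi j hj hij)
  obtain ⟨u, hu, v, hv, huv⟩ := hcyc.exists_neg
  have huvA := hBneg u v huv
  obtain ⟨huT, hvT⟩ := hAneg u v huvA
  obtain ⟨w, hw, hwT⟩ := exists_mem_notMem_of_card_lt_card (s := T) (t := s) (by omega)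
  have hpos : ∀ i ∈ s, i ∈ T → 0 < A i w := by
    intro i hi hiT
    have hiw : i ≠ w := fun h => hwT (h ▸ hiT)
    refine (hadjA i hi w hw hiw).lt_or_gt.resolve_left fun hneg => hwT (hAneg i w hneg).2
  have huv' : u ≠ v := by
    rintro rfl
    exact (hA.2.1 u).not_lt huvA
  have htri : A u w * A w v * A v u < 0 := by
    rw [hA.1.apply v w, hA.1.apply u v]
    exact mul_neg_of_pos_of_neg (mul_pos (hpos u hu huT) (hpos v hv hvT)) huvA
  refine ⟨hcard, hadjA, hasNegCycleOn_of_triangle ?_ ?_ huv' hu (mem_coe.2 hw) hv htri⟩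
  · exact fun h => hwT (h ▸ huT)
  · exact fun h => hwT (h ▸ hvT)

end K4

section Gamma

variable {s n : ℕ}

theorem isSignedGraph_gammaSN : IsSignedGraph (GammaSN s n) := by
  refine ⟨?_, fun i => if_pos rfl, fun i j => ?_⟩
  · ext i j
    simp only [transpose_apply, GammaSN, eq_comm (a := j), and_comm (a := j.val ≠ n - 1),
      min_comm j.val]
  · unfold GammaSN
    split_ifs <;> norm_num

theorem gammaSN_apply_of_ne_last {i j : Fin n} (hi : i.val ≠ n - 1) (hj : j.val ≠ n - 1)
    (hij : i ≠ j) : GammaSN s n i j = 1 := by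
  rw [GammaSN, if_neg hij, if_pos ⟨hi, hj⟩]

theorem gammaSN_apply_last {i j : Fin n} (hi : i.val < n - 1) (hj : j.val = n - 1) :
    GammaSN s n i j = if i.val = 0 then -1 else if i.val ≤ s then 1 else 0 := by
  have hij : i ≠ j := fun h => by omega
  rw [GammaSN, if_neg hij, if_neg (by omega), min_eq_left (by omega)]

theorem isUnbalanced_gammaSN (hs : 1 ≤ s) (hn : 3 ≤ n) : IsUnbalanced (GammaSN s n) := by
  refine hasNegCycleOn_of_triangle (a := ⟨0, by omega⟩) (b := ⟨1, by omega⟩)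
    (c := ⟨n - 1, by omega⟩) (by simp) (by simp [Fin.ext_iff]; omega)
    (by simp [Fin.ext_iff]; omega) trivial trivial trivial ?_
  rw [gammaSN_apply_of_ne_last (by simp; omega) (by simp; omega) (by simp),
    gammaSN_apply_last (by simp; omega) rfl, isSignedGraph_gammaSN.1.apply,
    gammaSN_apply_last (by simp; omega) rfl]
  simp [hs]

theorem last_of_gammaSN_neg {i j : Fin n} (h : GammaSN s n i j < 0) :
    i.val = n - 1 ∨ j.val = n - 1 := by
  by_contra! hij
  by_cases he : i = j
  · subst he
    exact h.ne (isSignedGraph_gammaSN.2.1 i)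
  · exact h.not_ge (gammaSN_apply_of_ne_last hij.1 hij.2 he ▸ zero_le_one)

/-- Every vertex of a `K₄⁻` is adjacent to the last vertex, whose only neighbours are `0` and
`1`. -/
theorem not_isK4Minus_gammaSN_one (S : Finset (Fin n)) : ¬IsK4Minus (GammaSN 1 n) S := by
  rintro ⟨hcard, hadj, hcyc⟩
  obtain ⟨u, hu, v, hv, huv⟩ := hcyc.exists_neg
  obtain ⟨l, hlS, hl⟩ : ∃ l ∈ S, l.val = n - 1 :=
    (last_of_gammaSN_neg huv).elim (fun h => ⟨u, hu, h⟩) fun h => ⟨v, hv, h⟩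
  have hsub : S.image Fin.val ⊆ {0, 1, n - 1} := by
    intro k hk
    obtain ⟨w, hw, rfl⟩ := mem_image.1 hk
    by_cases hwl : w = l
    · simp [hwl, hl]
    have hwlt : w.val < n - 1 := by
      have := w.isLt
      have : w.val ≠ n - 1 := fun h => hwl (Fin.ext (h.trans hl.symm))
      omega
    have hne := hadj w hw l hlS hwl
    rw [gammaSN_apply_last hwlt hl] at hne
    split_ifs at hne with h0 h1
    · simp [h0]
    · simp; omega
    · exact absurd rfl hne
  have := (card_le_card hsub).trans card_le_three
  rw [card_image_of_injective _ Fin.val_injective] at this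
  omega

theorem tk4Free_gammaSN_one {t : ℕ} (ht : 0 < t) : TK4Free t (GammaSN 1 n) := by
  simpa [TK4Free, not_isK4Minus_gammaSN_one] using ht

theorem sub_two_le_lambdaMax_gammaSN (hn : 2 ≤ n) : (n : ℝ) - 2 ≤ lambdaMax (GammaSN s n) := by
  set S : Finset (Fin n) := univ.erase ⟨n - 1, by omega⟩
  have hclique : ∀ i ∈ S, ∀ j ∈ S, i ≠ j → GammaSN s n i j = 1 := fun i hi j hj hij =>
    gammaSN_apply_of_ne_last (by simpa [S, Fin.ext_iff] using hi)
      (by simpa [S, Fin.ext_iff] using hj) hij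
  have h := card_sub_one_le_lambdaMax isSignedGraph_gammaSN.1 isSignedGraph_gammaSN.2.1
    ⟨⟨0, by omega⟩, by simp [S, Fin.ext_iff]; omega⟩ hclique
  rw [card_erase_of_mem (mem_univ _), card_univ, Fintype.card_fin, Nat.cast_sub (by omega),
    Nat.cast_one] at h
  linarith

end Gamma

section Extremal

variable {n t : ℕ}

structure IsExtremal (t : ℕ) (A : Matrix (Fin n) (Fin n) ℝ) (x : Fin n → ℝ) : Prop where
  isSignedGraph : IsSignedGraph A
  tk4Free : TK4Free t A
  lambdaMax_le : ∀ B : Matrix (Fin n) (Fin n) ℝ,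
    IsSignedGraph B → IsUnbalanced B → TK4Free t B → lambdaMax B ≤ lambdaMax A
  nonneg : ∀ i, 0 ≤ x i
  dotProduct_self : x ⬝ᵥ x = 1
  mulVec_eq : A *ᵥ x = lambdaMax A • x

namespace IsExtremal

variable {A : Matrix (Fin n) (Fin n) ℝ} {x : Fin n → ℝ}

theorem sub_three_lt_lambdaMax (h : IsExtremal t A x) (hn : 3 ≤ n) :
    (n : ℝ) - 3 < lambdaMax A := by
  have := (sub_two_le_lambdaMax_gammaSN (s := 1) (by omega)).trans <|
    h.lambdaMax_le _ isSignedGraph_gammaSN (isUnbalanced_gammaSN le_rfl hn)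
      (tk4Free_gammaSN_one h.tk4Free.pos)
  linarith

/-- Otherwise `x i = x j = 0`, so that `λ₁(A) = xᵀ A x ≤ n - 3`. -/
theorem not_lt (h : IsExtremal t A x) (hn : 3 ≤ n) {B : Matrix (Fin n) (Fin n) ℝ}
    (hB : IsSignedGraph B) (hBu : IsUnbalanced B) (hBf : TK4Free t B)
    (hAB : ∀ i j, A i j ≤ B i j) (i j : Fin n) : ¬A i j < B i j := by
  intro hij
  have hA := h.isSignedGraph
  have hlam := h.lambdaMax_le B hB hBu hBf
  have hj := eq_zero_of_lt_of_lambdaMax_le hB.1 h.nonneg h.dotProduct_self h.mulVec_eq hAB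
    hlam hij
  have hi := eq_zero_of_lt_of_lambdaMax_le hB.1 h.nonneg h.dotProduct_self h.mulVec_eq hAB
    hlam (i := j) (j := i) (by rwa [hA.1.apply i j, hB.1.apply i j])
  have hne : i ≠ j := by
    rintro rfl
    exact hij.ne (by rw [hA.2.1, hB.2.1])
  have hquad := hA.dotProduct_mulVec_le_of_eq_zero h.nonneg h.dotProduct_self hne hi hj
  rw [h.mulVec_eq, dotProduct_smul, h.dotProduct_self, smul_eq_mul, mul_one] at hquad
  linarith [h.sub_three_lt_lambdaMax hn]

/-- Deleting a negative edge outside `T` keeps the negative cycle on `T` and creates no `K₄⁻`. -/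
theorem mem_of_neg (h : IsExtremal t A x) (hn : 3 ≤ n) {T : Set (Fin n)}
    (hT : HasNegCycleOn A T) {a b : Fin n} (hab : A a b < 0) : a ∈ T ∧ b ∈ T := by
  by_contra hnot
  have hA := h.isSignedGraph
  have hne : a ≠ b := by
    rintro rfl
    exact hab.ne (hA.2.1 a)
  refine h.not_lt hn (hA.setEdge hne (Or.inr (Or.inl rfl)))
    ((hT.congr fun i hi j hj => (setEdge_apply_of_notMem hnot hi hj).symm).mono
      (Set.subset_univ _))
    (h.tk4Free.mono fun _ hs => hs.of_setEdge_zero hne) (le_setEdge hA.1 hab.le) a b ?_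
  rwa [setEdge_apply_self]

/-- Making `a b` and `b c` positive leaves `c a` as the only negative edge, so every `K₄⁻` of the
new graph was already one of `A`. -/
theorem not_neg_triangle (h : IsExtremal t A x) (hn : 3 ≤ n) {a b c : Fin n} (hab : a ≠ b)
    (hbc : b ≠ c) (hac : a ≠ c)
    (hneg : ∀ i j, A i j < 0 →
      i ∈ ({a, b, c} : Finset (Fin n)) ∧ j ∈ ({a, b, c} : Finset (Fin n)))
    (h1 : A a b < 0) (h2 : A b c < 0) (h3 : A c a < 0) : False := by
  have hA := h.isSignedGraph
  have hne : a ≠ b ∧ b ≠ c ∧ a ≠ c ∧ b ≠ a ∧ c ≠ b ∧ c ≠ a :=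
    ⟨hab, hbc, hac, hab.symm, hbc.symm, hac.symm⟩
  set M := setEdge A a b 1
  set B := setEdge M b c 1
  have hM : IsSignedGraph M := hA.setEdge hab (Or.inr (Or.inr rfl))
  have hB : IsSignedGraph B := hM.setEdge hbc (Or.inr (Or.inr rfl))
  have hMbc : M b c = A b c := setEdge_apply_of_ne (by simp [hne])
  have hBab : B a b = 1 := (setEdge_apply_of_ne (by simp [hne])).trans setEdge_apply_self
  have hBca : B c a = A c a :=
    (setEdge_apply_of_ne (by simp [hne])).trans (setEdge_apply_of_ne (by simp [hne]))
  have hBu : IsUnbalanced B := by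
    refine hasNegCycleOn_of_triangle hab hbc hac trivial trivial trivial ?_
    rw [hBab, show B b c = 1 from setEdge_apply_self, hBca]
    linarith
  have hBf : TK4Free t B := h.tk4Free.mono fun _ hs =>
    hs.of_neg_mem hA card_le_three hneg
      (fun i j hij => ne_zero_of_setEdge_ne_zero hA.1 h1.ne
        (ne_zero_of_setEdge_ne_zero hM.1 (hMbc ▸ h2.ne) hij))
      fun i j hij => neg_of_setEdge_neg zero_le_one (neg_of_setEdge_neg zero_le_one hij)
  have hAB : ∀ i j, A i j ≤ B i j := fun i j =>
    (le_setEdge hA.1 (hA.apply_le_one a b) i j).trans (le_setEdge hM.1 (hM.apply_le_one b c) i j)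
  exact h.not_lt hn hB hBu hBf hAB a b (hBab ▸ h1.trans one_pos)

end IsExtremal

end Extremal

theorem one_neg_of_mul_mul_neg {u v w : ℝ} (h : u * v * w < 0)
    (hall : ¬(u < 0 ∧ v < 0 ∧ w < 0)) :
    (u < 0 ∧ 0 < v ∧ 0 < w) ∨ (0 < u ∧ v < 0 ∧ 0 < w) ∨ (0 < u ∧ 0 < v ∧ w < 0) := by
  have hu : u ≠ 0 := by rintro rfl; simp at h
  have hv : v ≠ 0 := by rintro rfl; simp at h
  have hw : w ≠ 0 := by rintro rfl; simp at h
  rcases hu.lt_or_gt with hu | hu <;> rcases hv.lt_or_gt with hv | hv <;>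
    rcases hw.lt_or_gt with hw | hw
  · exact absurd ⟨hu, hv, hw⟩ hall
  · nlinarith [mul_pos_of_neg_of_neg hu hv]
  · nlinarith [mul_neg_of_neg_of_pos hu hv]
  · exact Or.inl ⟨hu, hv, hw⟩
  · nlinarith [mul_neg_of_pos_of_neg hu hv]
  · exact Or.inr (Or.inl ⟨hu, hv, hw⟩)
  · exact Or.inr (Or.inr ⟨hu, hv, hw⟩)
  · nlinarith [mul_pos hu hv]

theorem ncard_neg_eq_one_of_triangle {n : ℕ} {A : Matrix (Fin n) (Fin n) ℝ} (hA : A.IsSymm)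
    {a b c : Fin n} (hab : a < b) (hbc : b < c)
    (hneg : ∀ i j, A i j < 0 →
      i ∈ ({a, b, c} : Finset (Fin n)) ∧ j ∈ ({a, b, c} : Finset (Fin n)))
    (hprod : A a b * A b c * A c a < 0) (hall : ¬(A a b < 0 ∧ A b c < 0 ∧ A c a < 0)) :
    {p : Fin n × Fin n | p.1 < p.2 ∧ A p.1 p.2 < 0}.ncard = 1 := by
  rw [hA.apply a c] at hprod hall
  have hq : ∀ q : Fin n × Fin n, q.1 < q.2 → A q.1 q.2 < 0 →
      q = (a, b) ∧ A a b < 0 ∨ q = (b, c) ∧ A b c < 0 ∨ q = (a, c) ∧ A a c < 0 := by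
    rintro ⟨i, j⟩ hij hqA
    obtain ⟨hi, hj⟩ := hneg i j hqA
    simp only [mem_insert, mem_singleton] at hi hj
    rcases hi with rfl | rfl | rfl <;> rcases hj with rfl | rfl | rfl <;>
      first | (exfalso; order) | simp [hqA]
  have hone : ∀ p : Fin n × Fin n, p.1 < p.2 → A p.1 p.2 < 0 →
      (∀ q : Fin n × Fin n, q.1 < q.2 → A q.1 q.2 < 0 → q = p) →
      {p : Fin n × Fin n | p.1 < p.2 ∧ A p.1 p.2 < 0}.ncard = 1 := fun p hp hpA huniq =>
    Set.ncard_eq_one.2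
      ⟨p, Set.eq_singleton_iff_unique_mem.2 ⟨⟨hp, hpA⟩, fun q hq => huniq q hq.1 hq.2⟩⟩
  rcases one_neg_of_mul_mul_neg hprod hall with ⟨h1, h2, h3⟩ | ⟨h1, h2, h3⟩ | ⟨h1, h2, h3⟩
  · refine hone (a, b) hab h1 fun q hq' hqA => ?_
    rcases hq q hq' hqA with h | h | h <;> [exact h.1; linarith [h.2]; linarith [h.2]]
  · refine hone (b, c) hbc h2 fun q hq' hqA => ?_
    rcases hq q hq' hqA with h | h | h <;> [linarith [h.2]; exact h.1; linarith [h.2]]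
  · refine hone (a, c) (hab.trans hbc) h3 fun q hq' hqA => ?_
    rcases hq q hq' hqA with h | h | h <;> [linarith [h.2]; linarith [h.2]; exact h.1]

theorem extremal_exactly_one_negative_edge (t : ℕ) :
    ∃ N : ℕ, ∀ n : ℕ, ∀ _hn : N + 4 ≤ n, t ≤ (n - 2).choose 2 →
      ∀ (A : Matrix (Fin n) (Fin n) ℝ) (x : Fin n → ℝ),
        IsSignedGraph A → IsUnbalanced A → TK4Free t A →
        (∀ B : Matrix (Fin n) (Fin n) ℝ,
          IsSignedGraph B → IsUnbalanced B → TK4Free t B → lambdaMax B ≤ lambdaMax A) →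
        (∀ i, 0 ≤ x i) → (∑ i, x i ^ 2) = 1 → A.mulVec x = lambdaMax A • x →
        let v1 : Fin n := ⟨0, by omega⟩
        let v2 : Fin n := ⟨1, by omega⟩
        let vn : Fin n := ⟨n - 1, by omega⟩
        A v1 v2 ≠ 0 → A v2 vn ≠ 0 → A vn v1 ≠ 0 →
        A v1 v2 * A v2 vn * A vn v1 < 0 →
        {p : Fin n × Fin n | p.1 < p.2 ∧ A p.1 p.2 < 0}.ncard = 1 := by
  refine ⟨0, ?_⟩
  intro n hn _ A x hA _ hfree hmax hx hx2 hAx v1 v2 vn _ _ _ htri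
  have h : IsExtremal t A x :=
    ⟨hA, hfree, hmax, hx, by simpa [dotProduct, sq] using hx2, hAx⟩
  have h3 : 3 ≤ n := by omega
  have h12 : v1 < v2 := Fin.mk_lt_mk.2 zero_lt_one
  have h2n : v2 < vn := Fin.mk_lt_mk.2 (by omega)
  have hT : HasNegCycleOn A ↑({v1, v2, vn} : Finset (Fin n)) :=
    hasNegCycleOn_of_triangle h12.ne h2n.ne (h12.trans h2n).ne (by simp) (by simp) (by simp) htri
  have hneg := fun i j (hij : A i j < 0) => h.mem_of_neg h3 hT hij
  exact ncard_neg_eq_one_of_triangle hA.1 h12 h2n hneg htri fun ⟨h1, h2, h3'⟩ =>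
    h.not_neg_triangle h3 h12.ne h2n.ne (h12.trans h2n).ne hneg h1 h2 h3'
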